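/- Let d, n be positive integers with n ≥ d, and let Φ = (φ_1, …, φ_n) be a family of unit vectors in 𝔽^d (𝔽 = ℝ or ℂ) that minimizes coherence among all families of n unit vectors in 𝔽^d, i.e., μ(Φ) ≤ μ(Ψ) for every family Ψ of n unit vectors in 𝔽^d. Then Φ spans 𝔽^d (i.e., Φ is a frame for 𝔽^d). -/

import Mathlib

/-!
If coherence is `0`, the family is orthonormal, hence has at most `d` members, so `n = d` and it
is a basis. Otherwise, if `Φ` did not span, pick a unit vector `e` orthogonal to every `φ_j` and
tilt each `φ_j` towards `e` by a different amount: `ψ_j = √(1 - s_j²) φ_j + s_j e`. Then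
`|⟨ψ_j, ψ_k⟩| ≤ √(1 - s_j²) √(1 - s_k²) μ + s_j s_k`, and with `s_j = (μ/3)^(j+1)` decreasing fast
enough the loss in the first term beats the gain in the second, so `μ(Ψ) < μ(Φ)`.
-/

/-- The coherence of a family of vectors `Φ` in `𝕜^d`:
`μ(Φ) = max_{j ≠ k} |⟨φ_j, φ_k⟩|` (equal to the max over `j < k` by symmetry),
with the convention that the coherence of a single vector is `0`. -/
noncomputable def coherence {𝕜 : Type*} [RCLike 𝕜] {d n : ℕ}
    (Φ : Fin n → EuclideanSpace 𝕜 (Fin d)) : ℝ :=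
  ((Finset.univ.filter fun p : Fin n × Fin n => p.1 ≠ p.2).sup
    fun p => ‖(inner 𝕜 (Φ p.1) (Φ p.2) : 𝕜)‖₊ : NNReal)

open scoped InnerProductSpace

section Tilt

variable {𝕜 E : Type*} [RCLike 𝕜] [NormedAddCommGroup E] [InnerProductSpace 𝕜 E]

theorem Submodule.exists_norm_eq_one_mem_orthogonal (K : Submodule 𝕜 E)
    [K.HasOrthogonalProjection] (hK : K ≠ ⊤) : ∃ e ∈ Kᗮ, ‖e‖ = 1 := by
  obtain ⟨v, hvK, hv⟩ := Submodule.exists_mem_ne_zero_of_ne_bot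
    (mt Submodule.orthogonal_eq_bot_iff.mp hK)
  exact ⟨(‖v‖⁻¹ : 𝕜) • v, Kᗮ.smul_mem _ hvK, norm_smul_inv_norm hv⟩

variable (𝕜) in
noncomputable def tilt (u e : E) (s : ℝ) : E :=
  (√(1 - s ^ 2) : 𝕜) • u + (s : 𝕜) • e

theorem norm_tilt {u e : E} {s : ℝ} (hu : ‖u‖ = 1) (he : ‖e‖ = 1) (hue : ⟪u, e⟫_𝕜 = 0)
    (hs : |s| ≤ 1) : ‖tilt 𝕜 u e s‖ = 1 := by
  have hs2 : 0 ≤ 1 - s ^ 2 := by nlinarith [sq_abs s, abs_nonneg s]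
  have hpyth := norm_add_sq_eq_norm_sq_add_norm_sq_of_inner_eq_zero (𝕜 := 𝕜)
    ((√(1 - s ^ 2) : 𝕜) • u) ((s : 𝕜) • e) (by simp [inner_smul_left, inner_smul_right, hue])
  rw [norm_smul, norm_smul, RCLike.norm_ofReal, RCLike.norm_ofReal, hu, he,
    abs_of_nonneg (Real.sqrt_nonneg _)] at hpyth
  have : ‖tilt 𝕜 u e s‖ ^ 2 = 1 := by
    rw [tilt, sq, hpyth]
    nlinarith [Real.sq_sqrt hs2, sq_abs s]
  exact (pow_eq_one_iff_of_nonneg (norm_nonneg _) two_ne_zero).mp this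

theorem inner_tilt_tilt {u v e : E} {s t : ℝ} (he : ‖e‖ = 1) (hue : ⟪u, e⟫_𝕜 = 0)
    (hve : ⟪v, e⟫_𝕜 = 0) :
    ⟪tilt 𝕜 u e s, tilt 𝕜 v e t⟫_𝕜 =
      ((√(1 - s ^ 2) * √(1 - t ^ 2) : ℝ) : 𝕜) * ⟪u, v⟫_𝕜 + ((s * t : ℝ) : 𝕜) := by
  have hev : ⟪e, v⟫_𝕜 = 0 := by rw [← inner_conj_symm, hve, map_zero]
  simp only [tilt, inner_add_left, inner_add_right, inner_smul_left, inner_smul_right, hue, hev,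
    RCLike.conj_ofReal, inner_self_eq_norm_sq_to_K, he]
  push_cast
  ring

/-- Since `√(1 - s²) ≤ 1 - s²/2`, the first term loses at least `μ s²/2`, more than `s t`. -/
theorem norm_inner_tilt_tilt_lt {u v e : E} {s t μ : ℝ} (he : ‖e‖ = 1) (hue : ⟪u, e⟫_𝕜 = 0)
    (hve : ⟪v, e⟫_𝕜 = 0) (huv : ‖⟪u, v⟫_𝕜‖ ≤ μ) (hs : 0 < s) (hs1 : s ≤ 1) (ht : 0 ≤ t)
    (hts : t < μ / 2 * s) : ‖⟪tilt 𝕜 u e s, tilt 𝕜 v e t⟫_𝕜‖ < μ := by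
  set c := √(1 - s ^ 2)
  set c' := √(1 - t ^ 2)
  have hc2 : c ^ 2 = 1 - s ^ 2 := Real.sq_sqrt (by nlinarith)
  have hc0 : 0 ≤ c := Real.sqrt_nonneg _
  have hc'1 : c' ≤ 1 := Real.sqrt_le_one.mpr (by nlinarith)
  have hμ : 0 ≤ μ := (norm_nonneg _).trans huv
  calc ‖⟪tilt 𝕜 u e s, tilt 𝕜 v e t⟫_𝕜‖
      ≤ ‖((c * c' : ℝ) : 𝕜) * ⟪u, v⟫_𝕜‖ + ‖((s * t : ℝ) : 𝕜)‖ := by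
        rw [inner_tilt_tilt he hue hve]; exact norm_add_le _ _
    _ = c * c' * ‖⟪u, v⟫_𝕜‖ + s * t := by
        rw [norm_mul, RCLike.norm_ofReal, RCLike.norm_ofReal,
          abs_of_nonneg (mul_nonneg hc0 (Real.sqrt_nonneg _)), abs_of_nonneg (mul_nonneg hs.le ht)]
    _ ≤ c * μ + s * t := by
        have : c * c' * ‖⟪u, v⟫_𝕜‖ ≤ c * 1 * μ := by gcongr
        linarith
    _ < μ := by
        have hc1 : c ≤ 1 := Real.sqrt_le_one.mpr (by nlinarith)
        have hs2 : s ^ 2 ≤ 2 * (1 - c) := by nlinarith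
        nlinarith [mul_lt_mul_of_pos_left hts hs]

end Tilt

section Coherence

variable {𝕜 : Type*} [RCLike 𝕜] {d n : ℕ}

theorem coherence_nonneg (Φ : Fin n → EuclideanSpace 𝕜 (Fin d)) : 0 ≤ coherence Φ :=
  NNReal.coe_nonneg _

theorem norm_inner_le_coherence (Φ : Fin n → EuclideanSpace 𝕜 (Fin d)) {j k : Fin n}
    (hjk : j ≠ k) : ‖⟪Φ j, Φ k⟫_𝕜‖ ≤ coherence Φ := by
  have : ‖⟪Φ j, Φ k⟫_𝕜‖₊ ≤ _ :=
    Finset.le_sup (f := fun p : Fin n × Fin n => ‖⟪Φ p.1, Φ p.2⟫_𝕜‖₊)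
      (by simpa using hjk : (j, k) ∈ Finset.univ.filter fun p : Fin n × Fin n => p.1 ≠ p.2)
  exact_mod_cast this

theorem coherence_lt_of_forall_norm_inner_lt {Φ : Fin n → EuclideanSpace 𝕜 (Fin d)} {μ : ℝ}
    (hμ : 0 < μ) (h : ∀ j k, j ≠ k → ‖⟪Φ j, Φ k⟫_𝕜‖ < μ) : coherence Φ < μ := by
  lift μ to NNReal using hμ.le
  rw [coherence, NNReal.coe_lt_coe, Finset.sup_lt_iff (by exact_mod_cast hμ)]
  intro p hp
  exact_mod_cast h p.1 p.2 (by simpa using hp)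

theorem coherence_le_one {Φ : Fin n → EuclideanSpace 𝕜 (Fin d)} (hΦ : ∀ j, ‖Φ j‖ = 1) :
    coherence Φ ≤ 1 := by
  rw [coherence, ← NNReal.coe_one, NNReal.coe_le_coe]
  refine Finset.sup_le fun p _ => ?_
  have := norm_inner_le_norm (𝕜 := 𝕜) (Φ p.1) (Φ p.2)
  rw [hΦ, hΦ, one_mul] at this
  exact_mod_cast this

theorem orthonormal_of_coherence_eq_zero {Φ : Fin n → EuclideanSpace 𝕜 (Fin d)}
    (hΦ : ∀ j, ‖Φ j‖ = 1) (h : coherence Φ = 0) : Orthonormal 𝕜 Φ := by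
  refine ⟨hΦ, fun j k hjk => ?_⟩
  exact norm_le_zero_iff.mp (h ▸ norm_inner_le_coherence Φ hjk)

theorem span_eq_top_of_coherence_eq_zero (hn : d ≤ n) {Φ : Fin n → EuclideanSpace 𝕜 (Fin d)}
    (hΦ : ∀ j, ‖Φ j‖ = 1) (h : coherence Φ = 0) : Submodule.span 𝕜 (Set.range Φ) = ⊤ := by
  have hli := (orthonormal_of_coherence_eq_zero hΦ h).linearIndependent
  have hnd : n ≤ d := by simpa using hli.fintype_card_le_finrank
  exact hli.span_eq_top_of_card_eq_finrank' (by simpa using le_antisymm hnd hn)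

theorem exists_unit_family_coherence_lt {Φ : Fin n → EuclideanSpace 𝕜 (Fin d)}
    (hΦ : ∀ j, ‖Φ j‖ = 1) (hpos : 0 < coherence Φ)
    (hspan : Submodule.span 𝕜 (Set.range Φ) ≠ ⊤) :
    ∃ Ψ : Fin n → EuclideanSpace 𝕜 (Fin d), (∀ j, ‖Ψ j‖ = 1) ∧ coherence Ψ < coherence Φ := by
  obtain ⟨e, he_perp, he⟩ := Submodule.exists_norm_eq_one_mem_orthogonal _ hspan
  have hΦe : ∀ j, ⟪Φ j, e⟫_𝕜 = 0 := fun j =>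
    Submodule.inner_right_of_mem_orthogonal (Submodule.subset_span (Set.mem_range_self j)) he_perp
  set μ := coherence Φ
  set r := μ / 3 with hr_def
  have hr : 0 < r := by positivity
  have hr1 : r ≤ 1 := by linarith [coherence_le_one hΦ, hr_def]
  have hs : ∀ j : Fin n, 0 < r ^ (j.val + 1) ∧ r ^ (j.val + 1) ≤ 1 := fun j =>
    ⟨pow_pos hr _, pow_le_one₀ hr.le hr1⟩
  have hdecay : ∀ j k : Fin n, j < k → r ^ (k.val + 1) < μ / 2 * r ^ (j.val + 1) := by
    intro j k hjk
    calc r ^ (k.val + 1) ≤ r ^ (j.val + 1 + 1) := pow_le_pow_of_le_one hr.le hr1 (by omega)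
      _ = r * r ^ (j.val + 1) := by ring
      _ < μ / 2 * r ^ (j.val + 1) := by gcongr; linarith [hr_def]
  refine ⟨fun j => tilt 𝕜 (Φ j) e (r ^ (j.val + 1)),
    fun j => norm_tilt (hΦ j) he (hΦe j) (abs_le.mpr ⟨by linarith [(hs j).1], (hs j).2⟩),
    coherence_lt_of_forall_norm_inner_lt hpos fun j k hjk => ?_⟩
  wlog hlt : j < k generalizing j k
  · rw [norm_inner_symm]
    exact this k j hjk.symm (lt_of_le_of_ne (not_lt.mp hlt) hjk.symm)
  exact norm_inner_tilt_tilt_lt he (hΦe j) (hΦe k) (norm_inner_le_coherence Φ hjk) (hs j).1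
    (hs j).2 (hs k).1.le (hdecay j k hlt)

end Coherence

theorem grassmannian_frame_spans_general {𝕜 : Type*} [RCLike 𝕜] {d n : ℕ}
    (hn : d ≤ n)
    (Φ : Fin n → EuclideanSpace 𝕜 (Fin d))
    (hunit : ∀ j, ‖Φ j‖ = 1)
    (hmin : ∀ Ψ : Fin n → EuclideanSpace 𝕜 (Fin d),
      (∀ j, ‖Ψ j‖ = 1) → coherence Φ ≤ coherence Ψ) :
    Submodule.span 𝕜 (Set.range Φ) = ⊤ := by
  rcases (coherence_nonneg Φ).eq_or_lt with h | hpos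
  · exact span_eq_top_of_coherence_eq_zero hn hunit h.symm
  by_contra hspan
  obtain ⟨Ψ, hΨ, hlt⟩ := exists_unit_family_coherence_lt hunit hpos hspan
  exact (hmin Ψ hΨ).not_gt hlt

/-- A Grassmannian frame (a coherence-minimizing family of `n ≥ d` unit vectors
in `𝔽^d`, `𝔽 = ℝ` or `ℂ`) spans `𝔽^d`, i.e., it is a frame. -/
theorem grassmannian_frame_spans {𝕜 : Type*} [RCLike 𝕜] {d n : ℕ}
    (hd : 0 < d) (hn : d ≤ n)
    (Φ : Fin n → EuclideanSpace 𝕜 (Fin d))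
    (hunit : ∀ j, ‖Φ j‖ = 1)
    (hmin : ∀ Ψ : Fin n → EuclideanSpace 𝕜 (Fin d),
      (∀ j, ‖Ψ j‖ = 1) → coherence Φ ≤ coherence Ψ) :
    Submodule.span 𝕜 (Set.range Φ) = ⊤ :=
  grassmannian_frame_spans_general hn Φ hunit hmin
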